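/- The following two statements are equivalent: (1) for all finite simple graphs G and H, all positive integers s and t, and all vertices x ∈ V(G), y ∈ V(H), π_{st}(G × H, (x, y)) ≤ π_s(G, x) · π_t(H, y); (2) for all finite simple graphs G and H, all positive ODD integers s and t, and all vertices x ∈ V(G), y ∈ V(H), π_{st}(G × H, (x, y)) ≤ π_s(G, x) · π_t(H, y). -/

import Mathlib

open scoped BigOperators

def PebMove {V : Type*} [DecidableEq V] (G : SimpleGraph V) (D D' : V → ℕ) : Prop :=
  ∃ u v, G.Adj u v ∧ 2 ≤ D u ∧
    D' = fun w => if w = u then D u - 2 else if w = v then D v + 1 else D w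

def Reaches {V : Type*} [DecidableEq V] (G : SimpleGraph V) (D D' : V → ℕ) : Prop :=
  ∃ D'', Relation.ReflTransGen (PebMove G) D D'' ∧ ∀ v, D' v ≤ D'' v

def pebTotal {V : Type*} [Fintype V] (D : V → ℕ) : ℕ := ∑ v, D v

noncomputable def pebSet {V : Type*} [Fintype V] [DecidableEq V] (G : SimpleGraph V)
    (S : Set (V → ℕ)) : ℕ∞ :=
  sInf {N : ℕ∞ | ∀ D₀ : V → ℕ, N ≤ (pebTotal D₀ : ℕ∞) → ∀ D ∈ S, Reaches G D₀ D}

noncomputable def peb {V : Type*} [Fintype V] [DecidableEq V] (G : SimpleGraph V)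
    (D : V → ℕ) : ℕ∞ :=
  pebSet G {D}

def unitDist {V : Type*} [DecidableEq V] (t : ℕ) (v : V) : V → ℕ :=
  fun w => if w = v then t else 0

/-!
Powers of two can be split off one factor at a time. Attaching a leaf `x'` to `x` gives
`π_s(G + x', x') ≤ π_{2s}(G, x)`, since pebbles already lying on the leaf help no more than
themselves, and `π_{2m}(G □ H, (x, y)) ≤ π_m((G + x') □ H, (x', y))`, by reading each pebble on
the copy of `H` at `x'` as two pebbles on the copy at `x`. So the bound for `(s, t)` yields the
bound for `(2s, t)`, and by the symmetry of `□` also for `(s, 2t)`.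
-/

section Moves

variable {V : Type*} [DecidableEq V] {G : SimpleGraph V} {D D' E E' F : V → ℕ}

@[simp]
lemma unitDist_apply_self (t : ℕ) (v : V) : unitDist t v v = t := if_pos rfl

lemma unitDist_apply_of_ne {t : ℕ} {v w : V} (h : w ≠ v) : unitDist t v w = 0 := if_neg h

@[simp]
lemma unitDist_zero (v : V) : unitDist 0 v = 0 := funext fun w => by simp [unitDist]

lemma unitDist_add (a b : ℕ) (v : V) : unitDist (a + b) v = unitDist a v + unitDist b v := by
  funext w
  by_cases hw : w = v <;> simp [unitDist, hw]

lemma unitDist_mono {a b : ℕ} (h : a ≤ b) (v : V) : unitDist a v ≤ unitDist b v := fun w => by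
  by_cases hw : w = v <;> simp [unitDist, hw, h]

lemma pebMove_iff : PebMove G D D' ↔
    ∃ u v, G.Adj u v ∧ D' + unitDist 2 u = D + unitDist 1 v := by
  constructor
  · rintro ⟨u, v, huv, h2, rfl⟩
    refine ⟨u, v, huv, funext fun w => ?_⟩
    by_cases hu : w = u
    · simp_all [unitDist, huv.ne]
    · by_cases hv : w = v <;> simp_all [unitDist]
  · rintro ⟨u, v, huv, h⟩
    have hu := congrFun h u
    simp [unitDist, huv.ne] at hu
    refine ⟨u, v, huv, by omega, funext fun w => ?_⟩
    have hw := congrFun h w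
    by_cases hu : w = u
    · subst hu
      simp_all [unitDist, huv.ne]
      omega
    · by_cases hv : w = v <;> simp_all [unitDist]

lemma PebMove.add_right (h : PebMove G D D') (F : V → ℕ) : PebMove G (D + F) (D' + F) := by
  obtain ⟨u, v, huv, h⟩ := pebMove_iff.1 h
  exact pebMove_iff.2 ⟨u, v, huv, by rw [add_right_comm, h, add_right_comm]⟩

lemma reflTransGen_pebMove_add_right (h : Relation.ReflTransGen (PebMove G) D D') (F : V → ℕ) :
    Relation.ReflTransGen (PebMove G) (D + F) (D' + F) := by
  induction h with
  | refl => exact .refl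
  | tail _ hmove ih => exact ih.tail (hmove.add_right F)

namespace Reaches

lemma of_le (h : D' ≤ D) : Reaches G D D' := ⟨D, .refl, h⟩

lemma refl (D : V → ℕ) : Reaches G D D := of_le le_rfl

lemma mono_right (h : Reaches G D E) (hE : E' ≤ E) : Reaches G D E' :=
  let ⟨F, hDF, hEF⟩ := h
  ⟨F, hDF, fun v => (hE v).trans (hEF v)⟩

lemma trans (h₁ : Reaches G D E) (h₂ : Reaches G E F) : Reaches G D F := by
  obtain ⟨D₁, hDD₁, hED₁ : E ≤ D₁⟩ := h₁
  obtain ⟨E₁, hEE₁, hFE₁ : F ≤ E₁⟩ := h₂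
  have hE := reflTransGen_pebMove_add_right hEE₁ (D₁ - E)
  rw [add_tsub_cancel_of_le hED₁] at hE
  exact ⟨E₁ + (D₁ - E), hDD₁.trans hE, hFE₁.trans le_self_add⟩

lemma add (h₁ : Reaches G D E) (h₂ : Reaches G D' E') : Reaches G (D + D') (E + E') := by
  obtain ⟨D₁, hDD₁, hED₁ : E ≤ D₁⟩ := h₁
  obtain ⟨D₁', hDD₁', hED₁' : E' ≤ D₁'⟩ := h₂
  refine ⟨D₁ + D₁', ?_, add_le_add hED₁ hED₁'⟩
  have h₂ := reflTransGen_pebMove_add_right hDD₁' D₁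
  rw [add_comm D', add_comm D₁'] at h₂
  exact (reflTransGen_pebMove_add_right hDD₁ D').trans h₂

lemma unitDist_two_mul {u v : V} (huv : G.Adj u v) (m : ℕ) :
    Reaches G (unitDist (2 * m) u) (unitDist m v) := by
  induction m with
  | zero => exact of_le (by simp)
  | succ m ih =>
    have hmove : PebMove G (unitDist 2 u) (unitDist 1 v) :=
      pebMove_iff.2 ⟨u, v, huv, add_comm _ _⟩
    have h := ih.add ⟨_, .single hmove, fun _ => le_rfl⟩
    rwa [← unitDist_add, ← unitDist_add] at h

end Reaches

end Moves

section SparePebble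

variable {V : Type*} [DecidableEq V] {G : SimpleGraph V} {D C F F' : V → ℕ} {w : V}

/-- The spare pebble is tracked as a token on `w`: a move of `F` that `C` cannot copy must use the
token, which then travels to the target of the move. -/
lemma PebMove.exists_le_add_unitDist_one (hF : F ≤ C + unitDist 1 w) (h : PebMove G F F') :
    ∃ C' w', Relation.ReflTransGen (PebMove G) C C' ∧ F' ≤ C' + unitDist 1 w' := by
  obtain ⟨u, v, huv, hF'⟩ := pebMove_iff.1 h
  have hFu := congrFun hF' u
  simp only [Pi.add_apply, unitDist_apply_self, unitDist_apply_of_ne huv.ne] at hFu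
  by_cases hC : 2 ≤ C u
  · have hCu : unitDist 2 u ≤ C := fun z => by
      by_cases hz : z = u <;> simp [unitDist, hz, hC]
    have hC' : C - unitDist 2 u + unitDist 1 v + unitDist 2 u = C + unitDist 1 v := by
      rw [add_right_comm, tsub_add_cancel_of_le hCu]
    refine ⟨_, w, .single (pebMove_iff.2 ⟨u, v, huv, hC'⟩), fun z => ?_⟩
    have h₁ := congrFun hF' z
    have h₂ := congrFun hC' z
    have h₃ := hF z
    simp only [Pi.add_apply] at h₁ h₂ h₃ ⊢
    by_cases hzu : z = u <;> simp only [unitDist, hzu, if_true, if_false] at h₁ h₂ h₃ ⊢ <;> omega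
  · have hwu : w = u := by
      by_contra hwu
      have := hF u
      simp [unitDist_apply_of_ne (Ne.symm hwu)] at this
      omega
    subst hwu
    refine ⟨C, v, .refl, fun z => ?_⟩
    have h₁ := congrFun hF' z
    have h₃ := hF z
    simp only [Pi.add_apply, unitDist] at h₁ h₃ ⊢
    split_ifs at h₁ h₃ ⊢ <;> omega

lemma exists_le_add_unitDist_one_of_reflTransGen (hF : F ≤ C + unitDist 1 w)
    (h : Relation.ReflTransGen (PebMove G) F F') :
    ∃ C' w', Relation.ReflTransGen (PebMove G) C C' ∧ F' ≤ C' + unitDist 1 w' := by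
  induction h with
  | refl => exact ⟨C, w, .refl, hF⟩
  | tail _ hmove ih =>
    obtain ⟨C₁, w₁, hCC₁, hF₁⟩ := ih
    obtain ⟨C₂, w₂, hC₁C₂, hF₂⟩ := hmove.exists_le_add_unitDist_one hF₁
    exact ⟨C₂, w₂, hCC₁.trans hC₁C₂, hF₂⟩

lemma Reaches.of_add_unitDist_one {v : V} {m : ℕ}
    (h : Reaches G (D + unitDist 1 v) (unitDist (m + 1) v)) : Reaches G D (unitDist m v) := by
  obtain ⟨F, hDF, hF⟩ := h
  obtain ⟨C, w, hDC, hFC⟩ := exists_le_add_unitDist_one_of_reflTransGen le_rfl hDF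
  refine ⟨C, hDC, fun z => ?_⟩
  by_cases hz : z = v
  · subst hz
    have h₁ := hF z
    have h₂ := hFC z
    simp only [Pi.add_apply, unitDist] at h₁ h₂ ⊢
    split_ifs at h₁ h₂ ⊢ <;> omega
  · simp [unitDist_apply_of_ne hz]

lemma Reaches.of_add_unitDist {v : V} {m j : ℕ}
    (h : Reaches G (D + unitDist j v) (unitDist (m + j) v)) : Reaches G D (unitDist m v) := by
  induction j generalizing D with
  | zero => simpa using h
  | succ j ih =>
    rw [unitDist_add, ← add_assoc, ← add_assoc] at h
    exact ih h.of_add_unitDist_one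

end SparePebble

lemma pebTotal_sum {V ι : Type*} [Fintype V] (s : Finset ι) (D : ι → V → ℕ) :
    pebTotal (∑ i ∈ s, D i) = ∑ i ∈ s, pebTotal (D i) := by
  simp only [pebTotal, Finset.sum_apply]
  exact Finset.sum_comm

section PebblingNumber

variable {V : Type*} [Fintype V] [DecidableEq V] {G : SimpleGraph V} {T D : V → ℕ} {N : ℕ∞}

lemma peb_le_of_forall_reaches (h : ∀ D, N ≤ pebTotal D → Reaches G D T) : peb G T ≤ N :=
  sInf_le fun D hD _ hT => hT ▸ h D hD

lemma reaches_of_peb_le (h : peb G T ≤ pebTotal D) : Reaches G D T :=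
  have hmem := csInf_mem (s := {N : ℕ∞ | ∀ D : V → ℕ, N ≤ pebTotal D →
      ∀ T' ∈ ({T} : Set (V → ℕ)), Reaches G D T'}) ⟨⊤, fun _ hD => absurd hD (by simp)⟩
  hmem D h T rfl

lemma pebTotal_unitDist (t : ℕ) (v : V) : pebTotal (unitDist t v) = t := by
  simp [pebTotal, unitDist]

lemma sum_unitDist_self (D : V → ℕ) : ∑ v, unitDist (D v) v = D := by
  funext w
  simp [Finset.sum_apply, unitDist]

end PebblingNumber

section WeightedPush

variable {V V' : Type*} [DecidableEq V] [Fintype V']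

def weightedPush (φ : V' → V) (w : V' → ℕ) : (V' → ℕ) →+ (V → ℕ) where
  toFun E := ∑ u, unitDist (w u * E u) (φ u)
  map_zero' := by simp
  map_add' E F := by simp [mul_add, unitDist_add, Finset.sum_add_distrib]

variable {φ : V' → V} {w : V' → ℕ}

lemma weightedPush_apply (E : V' → ℕ) :
    weightedPush φ w E = ∑ u, unitDist (w u * E u) (φ u) := rfl

lemma weightedPush_mono {E F : V' → ℕ} (h : E ≤ F) : weightedPush φ w E ≤ weightedPush φ w F := by
  rw [← add_tsub_cancel_of_le h, map_add]
  exact le_self_add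

lemma weightedPush_unitDist [DecidableEq V'] (t : ℕ) (u : V') :
    weightedPush φ w (unitDist t u) = unitDist (w u * t) (φ u) := by
  rw [weightedPush_apply, Finset.sum_eq_single u (fun u' _ hu' => by simp [unitDist, hu'])
    (by simp)]
  simp

lemma weightedPush_weightedPush_of_leftInverse [Fintype V] [DecidableEq V'] {ι : V → V'}
    (hι : Function.LeftInverse φ ι) (hw : ∀ v, w (ι v) = 1) (D : V → ℕ) :
    weightedPush φ w (weightedPush ι 1 D) = D := by
  simp [weightedPush_apply (w := 1), map_sum, weightedPush_unitDist, hι _, hw, sum_unitDist_self]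

lemma pebTotal_weightedPush_one [Fintype V] (E : V' → ℕ) :
    pebTotal (weightedPush φ 1 E) = pebTotal E := by
  simp only [weightedPush_apply, Pi.one_apply, one_mul, pebTotal_sum, pebTotal_unitDist]
  rfl

end WeightedPush

section Simulation

variable {V V' : Type*} {G : SimpleGraph V} {G' : SimpleGraph V'} {φ : V' → V} {w : V' → ℕ}

/-- Read a pebble on `u` as `w u` pebbles on `φ u`. A move of `G'` along an edge collapsed by `φ`
then loses value, and one along an edge mapped to an edge of `G` is matched by `w u` moves
of `G`. -/
def IsPebblingSimulation (G' : SimpleGraph V') (G : SimpleGraph V) (φ : V' → V) (w : V' → ℕ) :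
    Prop :=
  ∀ ⦃u u'⦄, G'.Adj u u' → (φ u = φ u' ∧ w u' ≤ 2 * w u) ∨ (G.Adj (φ u) (φ u') ∧ w u' ≤ w u)

lemma SimpleGraph.Hom.isPebblingSimulation (f : G' →g G) : IsPebblingSimulation G' G f 1 :=
  fun _ _ h => .inr ⟨f.map_adj h, le_rfl⟩

variable [DecidableEq V] [DecidableEq V'] [Fintype V']

lemma PebMove.reaches_weightedPush (hsim : IsPebblingSimulation G' G φ w) {E E' : V' → ℕ}
    (h : PebMove G' E E') : Reaches G (weightedPush φ w E) (weightedPush φ w E') := by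
  obtain ⟨u, u', huu', hE⟩ := pebMove_iff.1 h
  have key := congrArg (weightedPush φ w) hE
  simp only [map_add, weightedPush_unitDist, mul_one] at key
  set P := weightedPush φ w E
  set P' := weightedPush φ w E'
  rcases hsim huu' with ⟨hφ, hw⟩ | ⟨hadj, hw⟩
  · refine Reaches.of_le (le_of_add_le_add_right (a := unitDist (w u * 2) (φ u)) ?_)
    rw [key, hφ]
    exact add_le_add le_rfl (unitDist_mono (by omega) _)
  · have hPu := congrFun key (φ u)
    simp only [Pi.add_apply, unitDist_apply_self, unitDist_apply_of_ne (V := V) hadj.ne,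
      add_zero] at hPu
    have hle : unitDist (2 * w u) (φ u) ≤ P := fun z => by
      by_cases hz : z = φ u
      · subst hz
        rw [unitDist_apply_self, ← hPu, mul_comm]
        exact Nat.le_add_left _ _
      · simp [unitDist_apply_of_ne hz]
    set R := P - unitDist (2 * w u) (φ u)
    have hP : R + unitDist (2 * w u) (φ u) = P := tsub_add_cancel_of_le hle
    have hP' : P' = R + unitDist (w u') (φ u') := by
      refine add_right_cancel (b := unitDist (w u * 2) (φ u)) ?_
      rw [key, ← hP, mul_comm, add_right_comm]
    rw [← hP, hP']
    exact ((Reaches.refl R).add (Reaches.unitDist_two_mul hadj (w u))).mono_right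
      (add_le_add le_rfl (unitDist_mono hw _))

lemma Reaches.weightedPush (hsim : IsPebblingSimulation G' G φ w) {E F : V' → ℕ}
    (h : Reaches G' E F) : Reaches G (weightedPush φ w E) (weightedPush φ w F) := by
  obtain ⟨E₁, hEE₁, hFE₁ : F ≤ E₁⟩ := h
  refine Reaches.mono_right ?_ (weightedPush_mono hFE₁)
  clear hFE₁
  induction hEE₁ with
  | refl => exact .refl _
  | tail _ hmove ih => exact ih.trans (hmove.reaches_weightedPush hsim)

lemma peb_weightedPush_le [Fintype V] (hsim : IsPebblingSimulation G' G φ w) {ι : V → V'}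
    (hι : Function.LeftInverse φ ι) (hw : ∀ v, w (ι v) = 1) (T : V' → ℕ) :
    peb G (weightedPush φ w T) ≤ peb G' T := by
  refine peb_le_of_forall_reaches fun D hD => ?_
  rw [← pebTotal_weightedPush_one (φ := ι)] at hD
  simpa only [weightedPush_weightedPush_of_leftInverse hι hw] using
    (reaches_of_peb_le hD).weightedPush hsim

end Simulation

namespace SimpleGraph

variable {V W : Type*} {G : SimpleGraph V} {H : SimpleGraph W}

def addLeaf (G : SimpleGraph V) (x : V) : SimpleGraph (Option V) where
  Adj
    | some a, some b => G.Adj a b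
    | some a, none | none, some a => a = x
    | none, none => False
  symm := by
    refine ⟨?_⟩
    rintro (_ | a) (_ | b) h
    exacts [h, h, h, h.symm]
  loopless := by
    refine ⟨?_⟩
    rintro (_ | a) h
    exacts [h, G.loopless.irrefl a h]

lemma peb_addLeaf_le [Fintype V] [DecidableEq V] (x : V) (k : ℕ) :
    peb (G.addLeaf x) (unitDist k none) ≤ peb G (unitDist (2 * k) x) := by
  refine peb_le_of_forall_reaches fun D hD => ?_
  set j := D none
  by_cases hjk : k ≤ j
  · refine Reaches.of_le fun u => ?_
    rcases u with _ | a
    · simpa using hjk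
    · simp [unitDist]
  have hsplit : D = weightedPush some 1 (D ∘ some) + unitDist j none := by
    funext u
    rcases u with _ | a <;> simp [weightedPush_apply, Finset.sum_apply, unitDist, j]
  have htot : pebTotal (D ∘ some + unitDist j x) = pebTotal D := by
    simp [pebTotal, Fintype.sum_option, Finset.sum_add_distrib, unitDist, j, add_comm]
  -- moving the leaf's `j` pebbles onto `x` would give `2 * k` there; taking them back costs `≤ j`
  have hG : Reaches G (D ∘ some) (unitDist (2 * (k - j)) x) :=
    Reaches.of_add_unitDist (j := j) ((reaches_of_peb_le (htot ▸ hD)).mono_right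
      (unitDist_mono (by omega) x))
  have hleaf : Reaches (G.addLeaf x) (weightedPush some 1 (D ∘ some)) (unitDist (k - j) none) := by
    have h := hG.weightedPush (Hom.isPebblingSimulation (⟨some, fun h => h⟩ : G →g G.addLeaf x))
    rw [weightedPush_unitDist, Pi.one_apply, one_mul] at h
    exact h.trans (Reaches.unitDist_two_mul (show (G.addLeaf x).Adj (some x) none from rfl) _)
  rw [hsplit]
  exact (hleaf.add (.refl _)).mono_right (by rw [← unitDist_add]; exact unitDist_mono (by omega) _)

lemma isPebblingSimulation_addLeaf_boxProd (x : V) :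
    IsPebblingSimulation (G.addLeaf x □ H) (G □ H) (fun p => (p.1.getD x, p.2))
      (fun p => p.1.elim 2 fun _ => 1) := by
  rintro ⟨a, h⟩ ⟨b, h'⟩ hadj
  rcases boxProd_adj.1 hadj with ⟨hab, rfl⟩ | ⟨hhh, rfl⟩
  · rcases a with _ | a <;> rcases b with _ | b
    · exact hab.elim
    · exact .inl ⟨by simp [show b = x from hab], by simp⟩
    · exact .inl ⟨by simp [show a = x from hab], by simp⟩
    · exact .inr ⟨boxProd_adj.2 (.inl ⟨hab, rfl⟩), le_rfl⟩
  · exact .inr ⟨boxProd_adj.2 (.inr ⟨hhh, rfl⟩), le_rfl⟩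

lemma peb_boxProd_le_addLeaf [Fintype V] [DecidableEq V] [Fintype W] [DecidableEq W]
    (x : V) (y : W) (m : ℕ) :
    peb (G □ H) (unitDist (2 * m) (x, y)) ≤ peb (G.addLeaf x □ H) (unitDist m (none, y)) := by
  simpa [weightedPush_unitDist] using peb_weightedPush_le (isPebblingSimulation_addLeaf_boxProd x)
    (ι := fun p => (some p.1, p.2)) (fun _ => rfl) (fun _ => rfl) (unitDist m (none, y))

lemma peb_boxProd_le_comm [Fintype V] [DecidableEq V] [Fintype W] [DecidableEq W]
    (n : ℕ) (x : V) (y : W) :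
    peb (G □ H) (unitDist n (x, y)) ≤ peb (H □ G) (unitDist n (y, x)) := by
  simpa [weightedPush_unitDist] using
    peb_weightedPush_le (boxProdComm H G).toHom.isPebblingSimulation
      (ι := boxProdComm G H) (fun _ => rfl) (fun _ => rfl) (unitDist n (y, x))

end SimpleGraph

open SimpleGraph in
def GrahamBound (s t : ℕ) : Prop :=
  ∀ (V W : Type) [Fintype V] [DecidableEq V] [Fintype W] [DecidableEq W]
    (G : SimpleGraph V) (H : SimpleGraph W) (x : V) (y : W),
    peb (G □ H) (unitDist (s * t) (x, y)) ≤ peb G (unitDist s x) * peb H (unitDist t y)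

namespace GrahamBound

open SimpleGraph

variable {s t : ℕ}

lemma symm (h : GrahamBound s t) : GrahamBound t s := by
  intro V W _ _ _ _ G H x y
  calc peb (G □ H) (unitDist (t * s) (x, y))
      ≤ peb (H □ G) (unitDist (s * t) (y, x)) := mul_comm s t ▸ peb_boxProd_le_comm _ x y
    _ ≤ peb H (unitDist s y) * peb G (unitDist t x) := h W V H G y x
    _ = peb G (unitDist t x) * peb H (unitDist s y) := mul_comm _ _

lemma two_mul_left (h : GrahamBound s t) : GrahamBound (2 * s) t := by
  intro V W _ _ _ _ G H x y
  calc peb (G □ H) (unitDist (2 * s * t) (x, y))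
      ≤ peb (G.addLeaf x □ H) (unitDist (s * t) (none, y)) :=
        (mul_assoc 2 s t).symm ▸ peb_boxProd_le_addLeaf x y _
    _ ≤ peb (G.addLeaf x) (unitDist s none) * peb H (unitDist t y) := h _ W _ H none y
    _ ≤ peb G (unitDist (2 * s) x) * peb H (unitDist t y) := by
        gcongr
        exact peb_addLeaf_le x s

lemma two_pow_mul_left (h : GrahamBound s t) (k : ℕ) : GrahamBound (2 ^ k * s) t := by
  induction k with
  | zero => simpa using h
  | succ k ih => simpa [pow_succ', mul_assoc] using ih.two_mul_left

lemma of_odd (h : ∀ s t, Odd s → Odd t → GrahamBound s t) (hs : s ≠ 0) (ht : t ≠ 0) :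
    GrahamBound s t := by
  obtain ⟨k, s, hs_odd, rfl⟩ := Nat.exists_eq_two_pow_mul_odd hs
  obtain ⟨l, t, ht_odd, rfl⟩ := Nat.exists_eq_two_pow_mul_odd ht
  exact (((h s t hs_odd ht_odd).two_pow_mul_left k).symm.two_pow_mul_left l).symm

end GrahamBound

open SimpleGraph in
/-- The Graham-type inequality for all positive `s, t` and all target vertices
is equivalent to the one restricted to odd `s, t`. -/
theorem st_iff_odd_st :
    (∀ (V W : Type) [Fintype V] [DecidableEq V] [Fintype W] [DecidableEq W]
        (G : SimpleGraph V) (H : SimpleGraph W) (s t : ℕ), 0 < s → 0 < t →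
        ∀ (x : V) (y : W),
        peb (G □ H) (unitDist (s * t) (x, y))
          ≤ peb G (unitDist s x) * peb H (unitDist t y)) ↔
    (∀ (V W : Type) [Fintype V] [DecidableEq V] [Fintype W] [DecidableEq W]
        (G : SimpleGraph V) (H : SimpleGraph W) (s t : ℕ), 0 < s → 0 < t →
        Odd s → Odd t → ∀ (x : V) (y : W),
        peb (G □ H) (unitDist (s * t) (x, y))
          ≤ peb G (unitDist s x) * peb H (unitDist t y)) := by
  refine ⟨fun h V W _ _ _ _ G H s t hs ht _ _ => h V W G H s t hs ht, fun h => ?_⟩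
  have hodd (s t : ℕ) (hs : Odd s) (ht : Odd t) : GrahamBound s t :=
    fun V W _ _ _ _ G H => h V W G H s t hs.pos ht.pos hs ht
  exact fun V W _ _ _ _ G H s t hs ht => GrahamBound.of_odd hodd hs.ne' ht.ne' V W G H
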